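/- Let u, v : ℝ → ℝ be càdlàg functions of locally bounded variation, and let a < b be real numbers with ∫_{(a,b]} |v(x−)| |du|(x) < ∞ and ∫_{(a,b]} |u(x)| |dv|(x) < ∞. Then ∫_{(a,b]} u(x) dv(x) = u(b)v(b) − u(a)v(a) − ∫_{(a,b]} v(x−) du(x). -/

import Mathlib

/-!
Both sides are bilinear in the Jordan decompositions `u = u₁ - u₂`, `v = v₁ - v₂`, so it suffices
to treat two Stieltjes functions `f`, `g`. Split the square `(a,b]²`, carrying `df ⊗ dg`, along the
diagonal into `{y ≤ x}` and `{x < y}`. By Fubini their masses are `∫ (g x - g a) df(x)` and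
`∫ (f(y-) - f a) dg(y)`, and they add up to `(f b - f a) (g b - g a)`.
-/

open MeasureTheory Set Function

theorem Monotone.integrableOn_Ioc {μ : Measure ℝ} [IsLocallyFiniteMeasure μ] {m : ℝ → ℝ}
    (hm : Monotone m) (a b : ℝ) : IntegrableOn m (Ioc a b) μ :=
  (hm.locallyIntegrable.integrableOn_isCompact isCompact_Icc).mono_set Ioc_subset_Icc_self

theorem Monotone.setIntegral_Ioc_sub {μ : Measure ℝ} [IsLocallyFiniteMeasure μ] {m₁ m₂ : ℝ → ℝ}
    (h₁ : Monotone m₁) (h₂ : Monotone m₂) (a b : ℝ) :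
    ∫ x in Ioc a b, (m₁ x - m₂ x) ∂μ = ∫ x in Ioc a b, m₁ x ∂μ - ∫ x in Ioc a b, m₂ x ∂μ :=
  integral_sub (h₁.integrableOn_Ioc a b) (h₂.integrableOn_Ioc a b)

theorem integral_measureReal_Iic_add_integral_measureReal_Iio {α : Type*} [LinearOrder α]
    [TopologicalSpace α] [OrderClosedTopology α] [SecondCountableTopology α] [MeasurableSpace α]
    [OpensMeasurableSpace α] (μ ν : Measure α) [IsFiniteMeasure μ] [IsFiniteMeasure ν] :
    ∫ x, ν.real (Iic x) ∂μ + ∫ y, μ.real (Iio y) ∂ν = μ.real univ * ν.real univ := by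
  set S := {p : α × α | p.2 ≤ p.1}
  have hS : MeasurableSet S := measurableSet_le measurable_snd measurable_fst
  have h₁ : ∫ x, ν.real (Iic x) ∂μ = (μ.prod ν).real S := by
    rw [← integral_indicator_one hS, integral_prod _ ((integrable_const 1).indicator hS)]
    simp_rw [← integral_indicator_one measurableSet_Iic]
    rfl
  have h₂ : ∫ y, μ.real (Iio y) ∂ν = (μ.prod ν).real Sᶜ := by
    rw [← integral_indicator_one hS.compl,
      integral_prod_symm _ ((integrable_const 1).indicator hS.compl)]
    simp_rw [← integral_indicator_one measurableSet_Iio]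
    simp only [S, indicator, mem_compl_iff, mem_ofPred_eq, mem_Iio, not_le, Pi.one_apply]
  rw [h₁, h₂, measureReal_add_measureReal_compl hS, ← univ_prod_univ, measureReal_prod_prod]

theorem Monotone.leftLim_sub {f g : ℝ → ℝ} (hf : Monotone f) (hg : Monotone g) (x : ℝ) :
    leftLim (fun y => f y - g y) x = leftLim f x - leftLim g x :=
  leftLim_eq_of_tendsto ((hf.tendsto_leftLim x).sub (hg.tendsto_leftLim x))

namespace StieltjesFunction

variable (f : StieltjesFunction ℝ) {a b x : ℝ}

theorem measureReal_Ioc (hab : a ≤ b) : f.measure.real (Ioc a b) = f b - f a := by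
  rw [measureReal_def, f.measure_Ioc, ENNReal.toReal_ofReal (sub_nonneg.2 (f.mono hab))]

theorem measureReal_Ioo (hab : a < b) : f.measure.real (Ioo a b) = leftLim f b - f a := by
  rw [measureReal_def, f.measure_Ioo, ENNReal.toReal_ofReal (sub_nonneg.2 (f.mono.le_leftLim hab))]

theorem measureReal_restrict_Ioc_Iic (hx : x ∈ Ioc a b) :
    (f.measure.restrict (Ioc a b)).real (Iic x) = f x - f a := by
  rw [measureReal_restrict_apply measurableSet_Iic, Iic_inter_Ioc_of_le hx.2,
    f.measureReal_Ioc hx.1.le]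

theorem measureReal_restrict_Ioc_Iio (hx : x ∈ Ioc a b) :
    (f.measure.restrict (Ioc a b)).real (Iio x) = leftLim f x - f a := by
  have : Iio x ∩ Ioc a b = Ioo a x := by
    ext y; simp only [mem_inter_iff, mem_Iio, mem_Ioc, mem_Ioo]; grind [hx.2]
  rw [measureReal_restrict_apply measurableSet_Iio, this, f.measureReal_Ioo hx.1]

theorem setIntegral_add_setIntegral_leftLim (g : StieltjesFunction ℝ) (hab : a ≤ b) :
    ∫ x in Ioc a b, g x ∂f.measure + ∫ x in Ioc a b, leftLim f x ∂g.measure =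
      f b * g b - f a * g a := by
  have : IsFiniteMeasure (f.measure.restrict (Ioc a b)) :=
    isFiniteMeasure_restrict.2 measure_Ioc_lt_top.ne
  have : IsFiniteMeasure (g.measure.restrict (Ioc a b)) :=
    isFiniteMeasure_restrict.2 measure_Ioc_lt_top.ne
  have key := integral_measureReal_Iic_add_integral_measureReal_Iio
    (f.measure.restrict (Ioc a b)) (g.measure.restrict (Ioc a b))
  rw [setIntegral_congr_fun measurableSet_Ioc fun x hx => g.measureReal_restrict_Ioc_Iic hx,
    setIntegral_congr_fun measurableSet_Ioc fun x hx => f.measureReal_restrict_Ioc_Iio hx,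
    integral_sub (g.mono.integrableOn_Ioc a b) (integrable_const _),
    integral_sub (f.mono.leftLim.integrableOn_Ioc a b) (integrable_const _),
    integral_const, integral_const, measureReal_restrict_apply_univ,
    measureReal_restrict_apply_univ, f.measureReal_Ioc hab, g.measureReal_Ioc hab, smul_eq_mul,
    smul_eq_mul] at key
  linear_combination key

end StieltjesFunction

theorem integration_by_parts_Ioc_general
    (u₁ u₂ v₁ v₂ : StieltjesFunction ℝ) (a b : ℝ) (hab : a < b)
    (u : ℝ → ℝ) (hu : u = fun x => u₁ x - u₂ x)
    (v : ℝ → ℝ) (hv : v = fun x => v₁ x - v₂ x) :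
    (∫ x in Set.Ioc a b, u x ∂v₁.measure) - (∫ x in Set.Ioc a b, u x ∂v₂.measure) =
      u b * v b - u a * v a -
        ((∫ x in Set.Ioc a b, Function.leftLim v x ∂u₁.measure) -
          (∫ x in Set.Ioc a b, Function.leftLim v x ∂u₂.measure)) := by
  subst hu hv
  simp only [v₁.mono.leftLim_sub v₂.mono]
  rw [u₁.mono.setIntegral_Ioc_sub u₂.mono, u₁.mono.setIntegral_Ioc_sub u₂.mono,
    v₁.mono.leftLim.setIntegral_Ioc_sub v₂.mono.leftLim,
    v₁.mono.leftLim.setIntegral_Ioc_sub v₂.mono.leftLim]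
  linear_combination v₁.setIntegral_add_setIntegral_leftLim u₁ hab.le -
    v₁.setIntegral_add_setIntegral_leftLim u₂ hab.le -
    v₂.setIntegral_add_setIntegral_leftLim u₁ hab.le +
    v₂.setIntegral_add_setIntegral_leftLim u₂ hab.le

/-- **Integration by parts on a half-open interval `(a,b]` for càdlàg functions of
locally bounded variation.**
A càdlàg function of locally bounded variation is the difference of two Stieltjes
functions (Jordan decomposition); its signed Lebesgue–Stieltjes measure is the
difference of the two Stieltjes measures. If `u = u₁ - u₂` and `v = v₁ - v₂` with
`u₁,u₂,v₁,v₂` Stieltjes functions, `a < b`, `∫_{(a,b]} |v(x-)| |du|(x) < ∞` and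
`∫_{(a,b]} |u(x)| |dv|(x) < ∞`, then
`∫_{(a,b]} u dv = u(b)v(b) - u(a)v(a) - ∫_{(a,b]} v(x-) du(x)`. -/
theorem integration_by_parts_Ioc
    (u₁ u₂ v₁ v₂ : StieltjesFunction ℝ) (a b : ℝ) (hab : a < b)
    (u : ℝ → ℝ) (hu : u = fun x => u₁ x - u₂ x)
    (v : ℝ → ℝ) (hv : v = fun x => v₁ x - v₂ x)
    (hvu : IntegrableOn (fun x => Function.leftLim v x) (Set.Ioc a b)
      (u₁.measure + u₂.measure))
    (huv : IntegrableOn u (Set.Ioc a b) (v₁.measure + v₂.measure)) :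
    (∫ x in Set.Ioc a b, u x ∂v₁.measure) - (∫ x in Set.Ioc a b, u x ∂v₂.measure) =
      u b * v b - u a * v a -
        ((∫ x in Set.Ioc a b, Function.leftLim v x ∂u₁.measure) -
          (∫ x in Set.Ioc a b, Function.leftLim v x ∂u₂.measure)) :=
  integration_by_parts_Ioc_general u₁ u₂ v₁ v₂ a b hab u hu v hv
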